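/- arXiv:1412.8568 — 3 statements merged into one kernel-verified Lean document; each statement's English description precedes it below -/
import Mathlib

section
/- Let K be a square of side 2h, let u ∈ P₄(K) and v ∈ P_T(K) = P₂ + span{x₁³, x₂³}, and let Π_K be the rectangular Morley interpolation operator on K. Then ∫_K (∂²(u-Π_K u)/∂x₁∂x₂)(∂²v/∂x₁∂x₂) dx₁dx₂ = 0. -/
open MeasureTheory Set

/-- Partial derivative in the first variable. -/
noncomputable def pd1 (f : ℝ → ℝ → ℝ) : ℝ → ℝ → ℝ := fun x y => deriv (fun t => f t y) x
/-- Partial derivative in the second variable. -/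
noncomputable def pd2 (f : ℝ → ℝ → ℝ) : ℝ → ℝ → ℝ := fun x y => deriv (fun t => f x t) y

/-- Membership in P₄(ℝ²): bivariate polynomials of total degree ≤ 4. -/
def MemP4 (u : ℝ → ℝ → ℝ) : Prop :=
  ∃ c : Fin 5 → Fin 5 → ℝ, (∀ i j : Fin 5, 4 < i.1 + j.1 → c i j = 0) ∧
    ∀ x y : ℝ, u x y = ∑ i : Fin 5, ∑ j : Fin 5, c i j * x ^ (i : ℕ) * y ^ (j : ℕ)

/-- Membership in the 2D rectangular Morley shape space
P_T = P₂(ℝ²) + span{x₁³, x₂³}. -/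
def MemPT2 (v : ℝ → ℝ → ℝ) : Prop :=
  ∃ a₀ a₁ a₂ a₃ a₄ a₅ b₁ b₂ : ℝ, ∀ x y : ℝ,
    v x y = a₀ + a₁ * x + a₂ * y + a₃ * x ^ 2 + a₄ * x * y + a₅ * y ^ 2
      + b₁ * x ^ 3 + b₂ * y ^ 3

/-!
The mixed derivative `∂²v/∂x₁∂x₂` of any `v ∈ P_T` is a constant, so the integral reduces to
`∫_K ∂²w/∂x₁∂x₂` for `w = u - Π_K u`. Integrating twice by the fundamental theorem of calculus,
this equals the alternating sum of the values of `w` at the four vertices of `K`, which all vanish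
because `Π_K u` interpolates `u` there.
-/

theorem integral_Icc_eq_sub_of_hasDerivAt {f f' : ℝ → ℝ} {a b : ℝ} (hab : a ≤ b)
    (hf : ∀ x, HasDerivAt f (f' x) x) (hf' : Continuous f') :
    ∫ x in Icc a b, f' x = f b - f a := by
  rw [integral_Icc_eq_integral_Ioc, ← intervalIntegral.integral_of_le hab]
  exact intervalIntegral.integral_eq_sub_of_hasDerivAt (fun x _ => hf x)
    (hf'.intervalIntegrable a b)

theorem integral_Icc_integral_Icc_eq_vertex_sum {w w₁ w₁₂ : ℝ → ℝ → ℝ} {a b c d : ℝ}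
    (hab : a ≤ b) (hcd : c ≤ d)
    (hw : ∀ x y, HasDerivAt (fun t => w t y) (w₁ x y) x)
    (hw₁ : ∀ x y, HasDerivAt (fun t => w₁ x t) (w₁₂ x y) y)
    (hw₁_cont : ∀ y, Continuous fun x => w₁ x y) (hw₁₂_cont : ∀ x, Continuous (w₁₂ x)) :
    ∫ x in Icc a b, ∫ y in Icc c d, w₁₂ x y = (w b d - w b c) - (w a d - w a c) := by
  have inner : ∀ x, ∫ y in Icc c d, w₁₂ x y = w₁ x d - w₁ x c := fun x =>
    integral_Icc_eq_sub_of_hasDerivAt hcd (hw₁ x) (hw₁₂_cont x)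
  simp_rw [inner]
  exact integral_Icc_eq_sub_of_hasDerivAt hab (fun x => (hw x d).sub (hw x c))
    ((hw₁_cont d).sub (hw₁_cont c))

section Bipoly

variable {m n : ℕ} (c : Fin m → Fin n → ℝ)

def bipoly (x y : ℝ) : ℝ :=
  ∑ i, ∑ j, c i j * x ^ (i : ℕ) * y ^ (j : ℕ)

def bipolyDerivFst (x y : ℝ) : ℝ :=
  ∑ i, ∑ j, c i j * ((i : ℕ) * x ^ ((i : ℕ) - 1)) * y ^ (j : ℕ)

def bipolyDerivFstSnd (x y : ℝ) : ℝ :=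
  ∑ i, ∑ j, c i j * ((i : ℕ) * x ^ ((i : ℕ) - 1)) * ((j : ℕ) * y ^ ((j : ℕ) - 1))

theorem hasDerivAt_bipoly_fst (x y : ℝ) :
    HasDerivAt (fun t => bipoly c t y) (bipolyDerivFst c x y) x :=
  HasDerivAt.fun_sum fun i _ => HasDerivAt.fun_sum fun j _ =>
    ((hasDerivAt_pow (i : ℕ) x).const_mul (c i j)).mul_const _

theorem hasDerivAt_bipolyDerivFst_snd (x y : ℝ) :
    HasDerivAt (fun t => bipolyDerivFst c x t) (bipolyDerivFstSnd c x y) y :=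
  HasDerivAt.fun_sum fun _ _ => HasDerivAt.fun_sum fun j _ =>
    (hasDerivAt_pow (j : ℕ) y).const_mul _

theorem continuous_bipolyDerivFst (y : ℝ) : Continuous fun x => bipolyDerivFst c x y := by
  unfold bipolyDerivFst; fun_prop

theorem continuous_bipolyDerivFstSnd (x : ℝ) : Continuous (bipolyDerivFstSnd c x) := by
  unfold bipolyDerivFstSnd; fun_prop

theorem pd2_pd1_bipoly : pd2 (pd1 (bipoly c)) = bipolyDerivFstSnd c := by
  have h1 : pd1 (bipoly c) = bipolyDerivFst c := by
    ext x y; exact (hasDerivAt_bipoly_fst c x y).deriv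
  ext x y
  rw [pd2, h1]
  exact (hasDerivAt_bipolyDerivFst_snd c x y).deriv

theorem integral_pd2_pd1_bipoly {a b a' b' : ℝ} (hab : a ≤ b) (hab' : a' ≤ b') :
    ∫ x in Icc a b, ∫ y in Icc a' b', pd2 (pd1 (bipoly c)) x y
      = (bipoly c b b' - bipoly c b a') - (bipoly c a b' - bipoly c a a') := by
  rw [pd2_pd1_bipoly]
  exact integral_Icc_integral_Icc_eq_vertex_sum hab hab' (hasDerivAt_bipoly_fst c)
    (hasDerivAt_bipolyDerivFst_snd c) (continuous_bipolyDerivFst c)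
    (continuous_bipolyDerivFstSnd c)

theorem bipoly_sub (d : Fin m → Fin n → ℝ) : bipoly (c - d) = bipoly c - bipoly d := by
  ext x y
  simp only [bipoly, Pi.sub_apply, sub_mul, Finset.sum_sub_distrib]

end Bipoly

def shapeCoeffs (a₀ a₁ a₂ a₃ a₄ a₅ b₁ b₂ : ℝ) : Fin 5 → Fin 5 → ℝ :=
  ![![a₀, a₂, a₅, b₂, 0], ![a₁, a₄, 0, 0, 0], ![a₃, 0, 0, 0, 0],
    ![b₁, 0, 0, 0, 0], ![0, 0, 0, 0, 0]]

theorem bipoly_shapeCoeffs (a₀ a₁ a₂ a₃ a₄ a₅ b₁ b₂ x y : ℝ) :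
    bipoly (shapeCoeffs a₀ a₁ a₂ a₃ a₄ a₅ b₁ b₂) x y
      = a₀ + a₁ * x + a₂ * y + a₃ * x ^ 2 + a₄ * x * y + a₅ * y ^ 2
        + b₁ * x ^ 3 + b₂ * y ^ 3 := by
  simp only [bipoly, shapeCoeffs, Fin.sum_univ_five, Matrix.cons_val', Matrix.cons_val_fin_one,
    Fin.isValue, Matrix.cons_val_zero, Matrix.cons_val_one, Matrix.cons_val, Fin.coe_ofNat_eq_mod,
    Nat.zero_mod, Nat.one_mod, Nat.reduceMod, Nat.mod_succ, pow_zero, pow_one, mul_one, zero_mul,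
    add_zero]
  ring

theorem bipolyDerivFstSnd_shapeCoeffs (a₀ a₁ a₂ a₃ a₄ a₅ b₁ b₂ x y : ℝ) :
    bipolyDerivFstSnd (shapeCoeffs a₀ a₁ a₂ a₃ a₄ a₅ b₁ b₂) x y = a₄ := by
  simp [bipolyDerivFstSnd, shapeCoeffs, Fin.sum_univ_five]

theorem MemP4.exists_eq_bipoly {u : ℝ → ℝ → ℝ} (hu : MemP4 u) :
    ∃ c : Fin 5 → Fin 5 → ℝ, u = bipoly c := by
  obtain ⟨c, -, hc⟩ := hu
  exact ⟨c, funext₂ hc⟩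

theorem MemPT2.exists_eq_bipoly {v : ℝ → ℝ → ℝ} (hv : MemPT2 v) :
    ∃ c : Fin 5 → Fin 5 → ℝ, v = bipoly c := by
  obtain ⟨a₀, a₁, a₂, a₃, a₄, a₅, b₁, b₂, hv⟩ := hv
  exact ⟨shapeCoeffs a₀ a₁ a₂ a₃ a₄ a₅ b₁ b₂,
    funext₂ fun x y => by rw [hv, bipoly_shapeCoeffs]⟩

theorem MemPT2.pd2_pd1_eq_const {v : ℝ → ℝ → ℝ} (hv : MemPT2 v) :
    ∃ k : ℝ, pd2 (pd1 v) = fun _ _ => k := by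
  obtain ⟨a₀, a₁, a₂, a₃, a₄, a₅, b₁, b₂, hv⟩ := hv
  have : v = bipoly (shapeCoeffs a₀ a₁ a₂ a₃ a₄ a₅ b₁ b₂) :=
    funext₂ fun x y => by rw [hv, bipoly_shapeCoeffs]
  refine ⟨a₄, ?_⟩
  rw [this, pd2_pd1_bipoly]
  exact funext₂ (bipolyDerivFstSnd_shapeCoeffs a₀ a₁ a₂ a₃ a₄ a₅ b₁ b₂)

theorem stmt13_general (h x₁c x₂c : ℝ) (hh : 0 < h)
    (u Pu v : ℝ → ℝ → ℝ) (hu : MemP4 u) (hPu : MemPT2 Pu) (hv : MemPT2 v)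
    (hvtx : ∀ s ∈ ({x₁c - h, x₁c + h} : Set ℝ), ∀ t ∈ ({x₂c - h, x₂c + h} : Set ℝ),
      Pu s t = u s t) :
    (∫ x in Icc (x₁c - h) (x₁c + h), ∫ y in Icc (x₂c - h) (x₂c + h),
      pd2 (pd1 (fun s t => u s t - Pu s t)) x y * pd2 (pd1 v) x y) = 0 := by
  obtain ⟨k, hk⟩ := hv.pd2_pd1_eq_const
  obtain ⟨c, rfl⟩ := hu.exists_eq_bipoly
  obtain ⟨d, rfl⟩ := hPu.exists_eq_bipoly
  have hw : (fun s t => bipoly c s t - bipoly d s t) = bipoly (c - d) := by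
    rw [bipoly_sub]; rfl
  have hvanish : ∀ s ∈ ({x₁c - h, x₁c + h} : Set ℝ), ∀ t ∈ ({x₂c - h, x₂c + h} : Set ℝ),
      bipoly (c - d) s t = 0 := fun s hs t ht => by
    rw [bipoly_sub, Pi.sub_apply, Pi.sub_apply, hvtx s hs t ht, sub_self]
  simp only [hk, integral_mul_const, hw]
  rw [integral_pd2_pd1_bipoly _ (by linarith) (by linarith)]
  simp [hvanish]

/-- For u ∈ P₄(K), v ∈ P_T(K) and the rectangular Morley interpolation Π_K:
∫_K ∂²(u-Π_K u)/∂x₁∂x₂ · ∂²v/∂x₁∂x₂ = 0. -/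
theorem stmt13 (h x₁c x₂c : ℝ) (hh : 0 < h)
    (u Pu v : ℝ → ℝ → ℝ) (hu : MemP4 u) (hPu : MemPT2 Pu) (hv : MemPT2 v)
    (hvtx : ∀ s ∈ ({x₁c - h, x₁c + h} : Set ℝ), ∀ t ∈ ({x₂c - h, x₂c + h} : Set ℝ),
      Pu s t = u s t)
    (hedge1 : ∀ s ∈ ({x₁c - h, x₁c + h} : Set ℝ),
      (∫ t in Icc (x₂c - h) (x₂c + h), pd1 Pu s t) =
        ∫ t in Icc (x₂c - h) (x₂c + h), pd1 u s t)
    (hedge2 : ∀ t ∈ ({x₂c - h, x₂c + h} : Set ℝ),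
      (∫ s in Icc (x₁c - h) (x₁c + h), pd2 Pu s t) =
        ∫ s in Icc (x₁c - h) (x₁c + h), pd2 u s t) :
    (∫ x in Icc (x₁c - h) (x₁c + h), ∫ y in Icc (x₂c - h) (x₂c + h),
      pd2 (pd1 (fun s t => u s t - Pu s t)) x y * pd2 (pd1 v) x y) = 0 :=
  stmt13_general h x₁c x₂c hh u Pu v hu hPu hv hvtx
end

section
/- Let K be a square of side 2h, u ∈ P₄(K), v ∈ P_T(K) = P₂ + span{x₁³,x₂³}, and Π_K the rectangular Morley interpolation on K. Then ∫_K (∂²(u-Π_K u)/∂x₁²)(∂²v/∂x₁²) dx₁dx₂ = (h²/3) ∫_K (∂³u/∂x₁∂x₂²)(∂³v/∂x₁³) dx₁dx₂. -/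
open MeasureTheory Set

/-!
Write `w = u - Π_K u`, `K = [a, b] × [c, d]`. On `P_T`, `∂₁₁v = α + β x₁` with `β = ∂₁₁₁v`, so two
integrations by parts in `x₁` turn the left side into
`(α + β b) ∫ ∂₁w(b, ·) - (α + β a) ∫ ∂₁w(a, ·) - β ∫ g`, where `g = w(b, ·) - w(a, ·)`.
The edge conditions kill the first two terms. Because `u ∈ P₄` and `Π_K u ∈ P_T`, `g` is a cubic,
and it vanishes at `c` and `d` by the vertex conditions, so the corrected trapezoidal rule gives
`∫ g = -((2h)² / 12) (g'(d) - g'(c))`. The `Π_K u` part of `g'` is constant, so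
`g'(d) - g'(c)` is the corner sum of `∂₂u`, which is `∫_K ∂₁∂₂₂u`.
-/

open scoped ContDiff
open Function intervalIntegral

theorem integral_Icc_eq_intervalIntegral {f : ℝ → ℝ} {a b : ℝ} (hab : a ≤ b) :
    ∫ x in Icc a b, f x = ∫ x in a..b, f x := by
  rw [integral_Icc_eq_integral_Ioc, integral_of_le hab]

theorem intervalIntegral_intervalIntegral_swap_of_continuous {F : ℝ → ℝ → ℝ}
    (hF : Continuous (uncurry F)) (a b c d : ℝ) :
    ∫ x in a..b, ∫ y in c..d, F x y = ∫ y in c..d, ∫ x in a..b, F x y :=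
  intervalIntegral_intervalIntegral_swap <|
    (hF.continuousOn.integrableOn_compact (isCompact_uIcc.prod isCompact_uIcc)).mono_set
      (prod_mono uIoc_subset_uIcc uIoc_subset_uIcc)

theorem integral_mul_affine_eq_of_hasDerivAt {f f' f'' : ℝ → ℝ}
    (hf : ∀ x, HasDerivAt f (f' x) x) (hf' : ∀ x, HasDerivAt f' (f'' x) x)
    (hf'' : Continuous f'') (α β a b : ℝ) :
    ∫ x in a..b, f'' x * (α + β * x) =
      f' b * (α + β * b) - f' a * (α + β * a) - β * (f b - f a) := by
  have hF : ∀ x ∈ uIcc a b, HasDerivAt (fun x => f' x * (α + β * x) - β * f x)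
      (f'' x * (α + β * x)) x := fun x _ =>
    (((hf' x).mul ((hasDerivAt_id' x).const_mul β |>.const_add α)).sub
      ((hf x).const_mul β)).congr_deriv (by ring)
  rw [integral_eq_sub_of_hasDerivAt hF (Continuous.intervalIntegrable (by fun_prop) _ _)]
  ring

theorem hasDerivAt_cubic (p₀ p₁ p₂ p₃ t : ℝ) :
    HasDerivAt (fun t => p₀ + p₁ * t + p₂ * t ^ 2 + p₃ * t ^ 3)
      (p₁ + 2 * p₂ * t + 3 * p₃ * t ^ 2) t :=
  ((((hasDerivAt_id' t).const_mul p₁ |>.const_add p₀).add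
    ((hasDerivAt_pow 2 t).const_mul p₂)).add
      ((hasDerivAt_pow 3 t).const_mul p₃)).congr_deriv (by push_cast; ring)

theorem integral_eq_corrected_trapezoid_of_cubic {g g' : ℝ → ℝ} {p₀ p₁ p₂ p₃ : ℝ}
    (hg : ∀ t, g t = p₀ + p₁ * t + p₂ * t ^ 2 + p₃ * t ^ 3) (hg' : ∀ t, HasDerivAt g (g' t) t)
    (c d : ℝ) :
    ∫ t in c..d, g t = (d - c) / 2 * (g c + g d) - (d - c) ^ 2 / 12 * (g' d - g' c) := by
  have hg_eq : g = fun t => p₀ + p₁ * t + p₂ * t ^ 2 + p₃ * t ^ 3 := funext hg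
  have hg'_eq : ∀ t, g' t = p₁ + 2 * p₂ * t + 3 * p₃ * t ^ 2 := fun t =>
    (hg' t).unique (hg_eq ▸ hasDerivAt_cubic p₀ p₁ p₂ p₃ t)
  have hG : ∀ t ∈ uIcc c d, HasDerivAt
      (fun t => p₀ * t + p₁ * t ^ 2 / 2 + p₂ * t ^ 3 / 3 + p₃ * t ^ 4 / 4) (g t) t :=
    fun t _ => (((((hasDerivAt_id' t).const_mul p₀).add
      ((hasDerivAt_pow 2 t).const_mul p₁ |>.div_const 2)).add
        ((hasDerivAt_pow 3 t).const_mul p₂ |>.div_const 3)).add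
          ((hasDerivAt_pow 4 t).const_mul p₃ |>.div_const 4)).congr_deriv
            (by rw [hg]; push_cast; ring)
  rw [integral_eq_sub_of_hasDerivAt hG
      (Continuous.intervalIntegrable (hg_eq ▸ by fun_prop) _ _), hg'_eq, hg'_eq, hg, hg]
  ring

section PartialDerivatives

variable {f g : ℝ → ℝ → ℝ}

theorem hasDerivAt_pd1 (hf : ContDiff ℝ 1 (uncurry f)) (x y : ℝ) :
    HasDerivAt (fun t => f t y) (pd1 f x y) x :=
  ((hf.differentiable one_ne_zero).differentiableAt.comp (f := fun t => (t, y)) x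
    (by fun_prop)).hasDerivAt

theorem hasDerivAt_pd2 (hf : ContDiff ℝ 1 (uncurry f)) (x y : ℝ) :
    HasDerivAt (fun t => f x t) (pd2 f x y) y :=
  ((hf.differentiable one_ne_zero).differentiableAt.comp (f := fun t => (x, t)) y
    (by fun_prop)).hasDerivAt

theorem uncurry_pd1_eq_fderiv (hf : ContDiff ℝ 1 (uncurry f)) :
    uncurry (pd1 f) = fun p => fderiv ℝ (uncurry f) p (1, 0) := by
  ext ⟨x, y⟩
  exact ((hf.differentiable one_ne_zero (x, y)).hasFDerivAt.comp_hasDerivAt x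
    ((hasDerivAt_id x).prodMk (hasDerivAt_const x y))).deriv

theorem uncurry_pd2_eq_fderiv (hf : ContDiff ℝ 1 (uncurry f)) :
    uncurry (pd2 f) = fun p => fderiv ℝ (uncurry f) p (0, 1) := by
  ext ⟨x, y⟩
  exact ((hf.differentiable one_ne_zero (x, y)).hasFDerivAt.comp_hasDerivAt y
    ((hasDerivAt_const y x).prodMk (hasDerivAt_id y))).deriv

theorem continuous_uncurry_pd1 (hf : ContDiff ℝ 1 (uncurry f)) :
    Continuous (uncurry (pd1 f)) := by
  rw [uncurry_pd1_eq_fderiv hf]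
  exact (hf.continuous_fderiv one_ne_zero).clm_apply continuous_const

theorem continuous_uncurry_pd2 (hf : ContDiff ℝ 1 (uncurry f)) :
    Continuous (uncurry (pd2 f)) := by
  rw [uncurry_pd2_eq_fderiv hf]
  exact (hf.continuous_fderiv one_ne_zero).clm_apply continuous_const

theorem contDiff_uncurry_pd1 {n : WithTop ℕ∞} (hf : ContDiff ℝ (n + 1) (uncurry f)) :
    ContDiff ℝ n (uncurry (pd1 f)) := by
  rw [uncurry_pd1_eq_fderiv (hf.of_le le_add_self)]
  exact (hf.fderiv_right le_rfl).clm_apply contDiff_const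

theorem contDiff_uncurry_pd2 {n : WithTop ℕ∞} (hf : ContDiff ℝ (n + 1) (uncurry f)) :
    ContDiff ℝ n (uncurry (pd2 f)) := by
  rw [uncurry_pd2_eq_fderiv (hf.of_le le_add_self)]
  exact (hf.fderiv_right le_rfl).clm_apply contDiff_const

theorem pd1_sub (hf : ContDiff ℝ 1 (uncurry f)) (hg : ContDiff ℝ 1 (uncurry g)) :
    pd1 (fun s t => f s t - g s t) = fun x y => pd1 f x y - pd1 g x y := by
  ext x y
  exact ((hasDerivAt_pd1 hf x y).sub (hasDerivAt_pd1 hg x y)).deriv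

theorem pd1_eq_of_cubic {A B : ℝ → ℝ} {C D : ℝ}
    (hf : ∀ x y, f x y = A y + B y * x + C * x ^ 2 + D * x ^ 3) (x y : ℝ) :
    pd1 f x y = B y + 2 * C * x + 3 * D * x ^ 2 := by
  have : (fun t => f t y) = fun t => A y + B y * t + C * t ^ 2 + D * t ^ 3 := funext (hf · y)
  exact (this ▸ hasDerivAt_cubic (A y) (B y) C D x).deriv

end PartialDerivatives

section Rectangle

variable {f : ℝ → ℝ → ℝ}

theorem integral_integral_pd1 (hf : ContDiff ℝ 1 (uncurry f)) (a b c d : ℝ) :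
    ∫ x in a..b, ∫ y in c..d, pd1 f x y = ∫ y in c..d, (f b y - f a y) := by
  rw [intervalIntegral_intervalIntegral_swap_of_continuous (continuous_uncurry_pd1 hf)]
  exact integral_congr fun y _ => integral_eq_sub_of_hasDerivAt
    (fun x _ => hasDerivAt_pd1 hf x y)
    (((continuous_uncurry_pd1 hf).uncurry_right y).intervalIntegrable _ _)

theorem integral_integral_pd1_pd2 (hf : ContDiff ℝ 2 (uncurry f)) (a b c d : ℝ) :
    ∫ x in a..b, ∫ y in c..d, pd1 (pd2 f) x y = (f b d - f b c) - (f a d - f a c) := by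
  have hf₁ : ContDiff ℝ 1 (uncurry f) := hf.of_le one_le_two
  have hint : ∀ x, IntervalIntegrable (pd2 f x) volume c d := fun x =>
    ((continuous_uncurry_pd2 hf₁).uncurry_left x).intervalIntegrable _ _
  rw [integral_integral_pd1 (contDiff_uncurry_pd2 hf),
    intervalIntegral.integral_sub (hint b) (hint a),
    integral_eq_sub_of_hasDerivAt (fun y _ => hasDerivAt_pd2 hf₁ b y) (hint b),
    integral_eq_sub_of_hasDerivAt (fun y _ => hasDerivAt_pd2 hf₁ a y) (hint a)]

theorem integral_integral_pd1_pd1_mul_affine (hf : ContDiff ℝ 2 (uncurry f))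
    (α β a b c d : ℝ) :
    ∫ x in a..b, ∫ y in c..d, pd1 (pd1 f) x y * (α + β * x) =
      (α + β * b) * (∫ y in c..d, pd1 f b y) - (α + β * a) * (∫ y in c..d, pd1 f a y)
        - β * ∫ y in c..d, (f b y - f a y) := by
  have hf₀ : ContDiff ℝ 1 (uncurry f) := hf.of_le one_le_two
  have hf₁ : ContDiff ℝ 1 (uncurry (pd1 f)) := contDiff_uncurry_pd1 hf
  have hf₂ := continuous_uncurry_pd1 hf₁
  rw [intervalIntegral_intervalIntegral_swap_of_continuous (by fun_prop),
    integral_congr fun y _ => integral_mul_affine_eq_of_hasDerivAt (hasDerivAt_pd1 hf₀ · y)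
      (hasDerivAt_pd1 hf₁ · y) (hf₂.uncurry_right y) α β a b]
  have := hf₀.continuous.uncurry_left a
  have := hf₀.continuous.uncurry_left b
  have := hf₁.continuous.uncurry_left a
  have := hf₁.continuous.uncurry_left b
  rw [intervalIntegral.integral_sub, intervalIntegral.integral_sub, intervalIntegral.integral_sub,
    intervalIntegral.integral_mul_const, intervalIntegral.integral_mul_const,
    intervalIntegral.integral_const_mul, intervalIntegral.integral_sub]
  · ring
  all_goals exact Continuous.intervalIntegrable (by fun_prop) _ _

end Rectangle

section Polynomials

variable {u f : ℝ → ℝ → ℝ}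

theorem MemP4.contDiff {n : WithTop ℕ∞} (hu : MemP4 u) : ContDiff ℝ n (uncurry u) := by
  obtain ⟨c, -, hu⟩ := hu
  have : uncurry u = fun p =>
      ∑ i : Fin 5, ∑ j : Fin 5, c i j * p.1 ^ (i : ℕ) * p.2 ^ (j : ℕ) := by
    ext ⟨x, y⟩; exact hu x y
  rw [this]
  fun_prop

theorem MemPT2.contDiff {n : WithTop ℕ∞} (hf : MemPT2 f) : ContDiff ℝ n (uncurry f) := by
  obtain ⟨a₀, a₁, a₂, a₃, a₄, a₅, b₁, b₂, hf⟩ := hf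
  have : uncurry f = fun p => a₀ + a₁ * p.1 + a₂ * p.2 + a₃ * p.1 ^ 2 + a₄ * p.1 * p.2
      + a₅ * p.2 ^ 2 + b₁ * p.1 ^ 3 + b₂ * p.2 ^ 3 := by
    ext ⟨x, y⟩; exact hf x y
  rw [this]
  fun_prop

theorem MemP4.exists_cubic_sub (hu : MemP4 u) (a b : ℝ) :
    ∃ p₀ p₁ p₂ p₃ : ℝ, ∀ y, u b y - u a y = p₀ + p₁ * y + p₂ * y ^ 2 + p₃ * y ^ 3 := by
  obtain ⟨c, hc, hu⟩ := hu
  let p (j : Fin 5) := ∑ i : Fin 5, c i j * (b ^ (i : ℕ) - a ^ (i : ℕ))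
  refine ⟨p 0, p 1, p 2, p 3, fun y => ?_⟩
  simp only [p, hu, Fin.sum_univ_five, hc 1 4 (by decide), hc 2 4 (by decide),
    hc 3 4 (by decide), hc 4 4 (by decide), Fin.val_zero, Fin.val_one, Fin.val_two,
    show ((3 : Fin 5) : ℕ) = 3 from rfl, show ((4 : Fin 5) : ℕ) = 4 from rfl]
  ring

theorem MemPT2.exists_affine_sub (hf : MemPT2 f) (a b : ℝ) :
    ∃ q₀ q₁ : ℝ, ∀ y, f b y - f a y = q₀ + q₁ * y := by
  obtain ⟨a₀, a₁, a₂, a₃, a₄, a₅, b₁, b₂, hf⟩ := hf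
  exact ⟨a₁ * (b - a) + a₃ * (b ^ 2 - a ^ 2) + b₁ * (b ^ 3 - a ^ 3), a₄ * (b - a),
    fun y => by rw [hf, hf]; ring⟩

theorem MemPT2.exists_pd1_pd1 (hf : MemPT2 f) :
    ∃ α β : ℝ, ∀ x y, pd1 (pd1 f) x y = α + β * x ∧ pd1 (pd1 (pd1 f)) x y = β := by
  obtain ⟨a₀, a₁, a₂, a₃, a₄, a₅, b₁, b₂, hf⟩ := hf
  have h₁ := pd1_eq_of_cubic (f := f) (A := fun y => a₀ + a₂ * y + a₅ * y ^ 2 + b₂ * y ^ 3)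
    (B := fun y => a₁ + a₄ * y) (C := a₃) (D := b₁) (fun x y => by rw [hf]; ring)
  have h₂ := pd1_eq_of_cubic (f := pd1 f) (A := fun y => a₁ + a₄ * y) (B := fun _ => 2 * a₃)
    (C := 3 * b₁) (D := 0) (fun x y => by rw [h₁]; ring)
  have h₃ := pd1_eq_of_cubic (f := pd1 (pd1 f)) (A := fun _ => 2 * a₃) (B := fun _ => 6 * b₁)
    (C := 0) (D := 0) (fun x y => by rw [h₂]; ring)
  exact ⟨2 * a₃, 6 * b₁, fun x y => ⟨by rw [h₂]; ring, by rw [h₃]; ring⟩⟩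

end Polynomials

theorem integral_sub_sub_eq_of_eq_on_vertices {u P : ℝ → ℝ → ℝ} (hu : MemP4 u) (hP : MemPT2 P)
    {a b c d : ℝ} (hvtx : ∀ s ∈ ({a, b} : Set ℝ), ∀ t ∈ ({c, d} : Set ℝ), P s t = u s t) :
    ∫ y in c..d, ((u b y - P b y) - (u a y - P a y)) =
      -((d - c) ^ 2 / 12 * ((pd2 u b d - pd2 u a d) - (pd2 u b c - pd2 u a c))) := by
  obtain ⟨p₀, p₁, p₂, p₃, hp⟩ := hu.exists_cubic_sub a b
  obtain ⟨q₀, q₁, hq⟩ := hP.exists_affine_sub a b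
  have hu₁ : ContDiff ℝ 1 (uncurry u) := hu.contDiff
  have hP₁ : ContDiff ℝ 1 (uncurry P) := hP.contDiff
  have hP' : ∀ y, pd2 P b y - pd2 P a y = q₁ := fun y =>
    ((hasDerivAt_pd2 hP₁ b y).sub (hasDerivAt_pd2 hP₁ a y)).unique
      (funext hq ▸ ((hasDerivAt_id' y).const_mul q₁).const_add q₀ |>.congr_deriv (mul_one q₁))
  rw [integral_eq_corrected_trapezoid_of_cubic
    (g := fun y => (u b y - P b y) - (u a y - P a y))
    (p₀ := p₀ - q₀) (p₁ := p₁ - q₁) (p₂ := p₂) (p₃ := p₃)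
    (fun y => by linear_combination hp y - hq y)
    (fun y => ((hasDerivAt_pd2 hu₁ b y).sub (hasDerivAt_pd2 hP₁ b y)).sub
      ((hasDerivAt_pd2 hu₁ a y).sub (hasDerivAt_pd2 hP₁ a y))),
    hvtx a (by simp) c (by simp), hvtx a (by simp) d (by simp), hvtx b (by simp) c (by simp),
    hvtx b (by simp) d (by simp)]
  linear_combination (d - c) ^ 2 / 12 * (hP' d - hP' c)

theorem stmt14_general (h x₁c x₂c : ℝ) (hh : 0 < h)
    (u Pu v : ℝ → ℝ → ℝ) (hu : MemP4 u) (hPu : MemPT2 Pu) (hv : MemPT2 v)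
    (hvtx : ∀ s ∈ ({x₁c - h, x₁c + h} : Set ℝ), ∀ t ∈ ({x₂c - h, x₂c + h} : Set ℝ),
      Pu s t = u s t)
    (hedge1 : ∀ s ∈ ({x₁c - h, x₁c + h} : Set ℝ),
      (∫ t in Icc (x₂c - h) (x₂c + h), pd1 Pu s t) =
        ∫ t in Icc (x₂c - h) (x₂c + h), pd1 u s t) :
    (∫ x in Icc (x₁c - h) (x₁c + h), ∫ y in Icc (x₂c - h) (x₂c + h),
      pd1 (pd1 (fun s t => u s t - Pu s t)) x y * pd1 (pd1 v) x y) =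
    (h ^ 2 / 3) * ∫ x in Icc (x₁c - h) (x₁c + h), ∫ y in Icc (x₂c - h) (x₂c + h),
      pd1 (pd2 (pd2 u)) x y * pd1 (pd1 (pd1 v)) x y := by
  have hab : x₁c - h ≤ x₁c + h := by linarith
  have hcd : x₂c - h ≤ x₂c + h := by linarith
  obtain ⟨α, β, hv'⟩ := hv.exists_pd1_pd1
  have hu₁ : ContDiff ℝ 1 (uncurry u) := hu.contDiff
  have hPu₁ : ContDiff ℝ 1 (uncurry Pu) := hPu.contDiff
  have hedge : ∀ s ∈ ({x₁c - h, x₁c + h} : Set ℝ),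
      ∫ y in (x₂c - h)..(x₂c + h), pd1 (fun s t => u s t - Pu s t) s y = 0 := fun s hs => by
    rw [pd1_sub hu₁ hPu₁, intervalIntegral.integral_sub
      (((continuous_uncurry_pd1 hu₁).uncurry_left s).intervalIntegrable _ _)
      (((continuous_uncurry_pd1 hPu₁).uncurry_left s).intervalIntegrable _ _),
      ← integral_Icc_eq_intervalIntegral hcd, ← integral_Icc_eq_intervalIntegral hcd,
      hedge1 s hs, sub_self]
  simp only [integral_Icc_eq_intervalIntegral hab, integral_Icc_eq_intervalIntegral hcd, hv']
  rw [integral_integral_pd1_pd1_mul_affine (hu.contDiff.sub hPu.contDiff), hedge _ (by simp),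
    hedge _ (by simp), integral_sub_sub_eq_of_eq_on_vertices hu hPu hvtx]
  simp only [intervalIntegral.integral_mul_const]
  rw [integral_integral_pd1_pd2 (contDiff_uncurry_pd2 hu.contDiff)]
  ring

/-- For u ∈ P₄(K), v ∈ P_T(K) and the rectangular Morley interpolation Π_K:
∫_K ∂²(u-Π_K u)/∂x₁² · ∂²v/∂x₁² = (h²/3)∫_K ∂³u/∂x₁∂x₂² · ∂³v/∂x₁³. -/
theorem stmt14 (h x₁c x₂c : ℝ) (hh : 0 < h)
    (u Pu v : ℝ → ℝ → ℝ) (hu : MemP4 u) (hPu : MemPT2 Pu) (hv : MemPT2 v)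
    (hvtx : ∀ s ∈ ({x₁c - h, x₁c + h} : Set ℝ), ∀ t ∈ ({x₂c - h, x₂c + h} : Set ℝ),
      Pu s t = u s t)
    (hedge1 : ∀ s ∈ ({x₁c - h, x₁c + h} : Set ℝ),
      (∫ t in Icc (x₂c - h) (x₂c + h), pd1 Pu s t) =
        ∫ t in Icc (x₂c - h) (x₂c + h), pd1 u s t)
    (hedge2 : ∀ t ∈ ({x₂c - h, x₂c + h} : Set ℝ),
      (∫ s in Icc (x₁c - h) (x₁c + h), pd2 Pu s t) =
        ∫ s in Icc (x₁c - h) (x₁c + h), pd2 u s t) :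
    (∫ x in Icc (x₁c - h) (x₁c + h), ∫ y in Icc (x₂c - h) (x₂c + h),
      pd1 (pd1 (fun s t => u s t - Pu s t)) x y * pd1 (pd1 v) x y) =
    (h ^ 2 / 3) * ∫ x in Icc (x₁c - h) (x₁c + h), ∫ y in Icc (x₂c - h) (x₂c + h),
      pd1 (pd2 (pd2 u)) x y * pd1 (pd1 (pd1 v)) x y :=
  stmt14_general h x₁c x₂c hh u Pu v hu hPu hv hvtx hedge1
end

section
/- The set of 12 degrees of freedom consisting of the values at the four vertices of the square K = [-1,1]² and the mean normal derivatives over the four edges of K is unisolvent for the 8-dimensional space P_T(K) = P₂ + span{ξ₁³, ξ₂³}: if v ∈ P_T(K) satisfies v(a_i) = 0 at all four vertices a_i and ∫_{F_j} ∂v/∂ν ds = 0 on all four edges F_j, then v = 0. -/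
open MeasureTheory Set

/-!
On the edge `ξ₁ = ±1` the normal derivative of
`v = a₀ + a₁ ξ₁ + a₂ ξ₂ + a₃ ξ₁² + a₄ ξ₁ξ₂ + a₅ ξ₂² + b₁ ξ₁³ + b₂ ξ₂³` is
`±(a₁ ± 2a₃ + 3b₁ + a₄ ξ₂)`, whose mean is `±(a₁ ± 2a₃ + 3b₁)`; similarly on `ξ₂ = ±1`.
So the edge conditions say `a₃ = a₅ = 0`, `a₁ = -3b₁`, `a₂ = -3b₂`, and then at the vertices
`v = a₀ - 2b₁ ξ₁ - 2b₂ ξ₂ + a₄ ξ₁ξ₂`. Since `1, ξ₁, ξ₂, ξ₁ξ₂` are orthogonal on the four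
vertices, the vertex conditions kill `a₀, b₁, b₂, a₄`.
-/

lemma hasDerivAt_cubic_s17 (c₀ c₁ c₂ c₃ x : ℝ) :
    HasDerivAt (fun t => c₀ + c₁ * t + c₂ * t ^ 2 + c₃ * t ^ 3)
      (c₁ + 2 * c₂ * x + 3 * c₃ * x ^ 2) x := by
  refine ((((hasDerivAt_const x c₀).add ((hasDerivAt_id' x).const_mul c₁)).add
    ((hasDerivAt_pow 2 x).const_mul c₂)).add ((hasDerivAt_pow 3 x).const_mul c₃)).congr_deriv ?_
  norm_num
  ring

lemma integral_Icc_affine {a b : ℝ} (hab : a ≤ b) (c d : ℝ) :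
    ∫ t in Icc a b, (c + d * t) = c * (b - a) + d * (b ^ 2 - a ^ 2) / 2 := by
  rw [integral_Icc_eq_integral_Ioc, ← intervalIntegral.integral_of_le hab,
    intervalIntegral.integral_add intervalIntegrable_const
      (intervalIntegral.intervalIntegrable_id.const_mul d),
    intervalIntegral.integral_const_mul, integral_id, intervalIntegral.integral_const,
    smul_eq_mul]
  ring

section MorleyPoly

variable (a₀ a₁ a₂ a₃ a₄ a₅ b₁ b₂ : ℝ)

def morleyPoly (x y : ℝ) : ℝ :=
  a₀ + a₁ * x + a₂ * y + a₃ * x ^ 2 + a₄ * x * y + a₅ * y ^ 2 + b₁ * x ^ 3 + b₂ * y ^ 3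

lemma pd1_morleyPoly (x y : ℝ) :
    pd1 (morleyPoly a₀ a₁ a₂ a₃ a₄ a₅ b₁ b₂) x y
      = a₁ + 2 * a₃ * x + a₄ * y + 3 * b₁ * x ^ 2 := by
  have h := hasDerivAt_cubic_s17 (a₀ + a₂ * y + a₅ * y ^ 2 + b₂ * y ^ 3) (a₁ + a₄ * y) a₃ b₁ x
  have hslice : (fun t => morleyPoly a₀ a₁ a₂ a₃ a₄ a₅ b₁ b₂ t y)
      = fun t => a₀ + a₂ * y + a₅ * y ^ 2 + b₂ * y ^ 3 + (a₁ + a₄ * y) * t + a₃ * t ^ 2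
        + b₁ * t ^ 3 := by
    funext t
    simp only [morleyPoly]
    ring
  rw [pd1, hslice, h.deriv]
  ring

lemma pd2_morleyPoly (x y : ℝ) :
    pd2 (morleyPoly a₀ a₁ a₂ a₃ a₄ a₅ b₁ b₂) x y
      = a₂ + a₄ * x + 2 * a₅ * y + 3 * b₂ * y ^ 2 := by
  have h := hasDerivAt_cubic_s17 (a₀ + a₁ * x + a₃ * x ^ 2 + b₁ * x ^ 3) (a₂ + a₄ * x) a₅ b₂ y
  have hslice : (fun t => morleyPoly a₀ a₁ a₂ a₃ a₄ a₅ b₁ b₂ x t)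
      = fun t => a₀ + a₁ * x + a₃ * x ^ 2 + b₁ * x ^ 3 + (a₂ + a₄ * x) * t + a₅ * t ^ 2
        + b₂ * t ^ 3 := by
    funext t
    simp only [morleyPoly]
    ring
  rw [pd2, hslice, h.deriv]

lemma integral_pd1_morleyPoly (x : ℝ) :
    ∫ t in Icc (-1 : ℝ) 1, pd1 (morleyPoly a₀ a₁ a₂ a₃ a₄ a₅ b₁ b₂) x t
      = 2 * (a₁ + 2 * a₃ * x + 3 * b₁ * x ^ 2) := by
  have hedge : ∀ t, pd1 (morleyPoly a₀ a₁ a₂ a₃ a₄ a₅ b₁ b₂) x t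
      = (a₁ + 2 * a₃ * x + 3 * b₁ * x ^ 2) + a₄ * t := fun t => by
    rw [pd1_morleyPoly]
    ring
  simp_rw [hedge]
  rw [integral_Icc_affine (by norm_num)]
  ring

lemma integral_pd2_morleyPoly (y : ℝ) :
    ∫ s in Icc (-1 : ℝ) 1, pd2 (morleyPoly a₀ a₁ a₂ a₃ a₄ a₅ b₁ b₂) s y
      = 2 * (a₂ + 2 * a₅ * y + 3 * b₂ * y ^ 2) := by
  have hedge : ∀ s, pd2 (morleyPoly a₀ a₁ a₂ a₃ a₄ a₅ b₁ b₂) s y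
      = (a₂ + 2 * a₅ * y + 3 * b₂ * y ^ 2) + a₄ * s := fun s => by
    rw [pd2_morleyPoly]
    ring
  simp_rw [hedge]
  rw [integral_Icc_affine (by norm_num)]
  ring

end MorleyPoly

/-- Unisolvence of the rectangular Morley degrees of freedom on K = [-1,1]²:
if v ∈ P_T(K) vanishes at the four vertices and the integral of its outward normal
derivative over each of the four edges vanishes, then v = 0. -/
theorem stmt17 (v : ℝ → ℝ → ℝ) (hv : MemPT2 v)
    (hvtx : v 1 1 = 0 ∧ v 1 (-1) = 0 ∧ v (-1) 1 = 0 ∧ v (-1) (-1) = 0)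
    (he1 : (∫ t in Icc (-1 : ℝ) 1, pd1 v 1 t) = 0)
    (he2 : (∫ t in Icc (-1 : ℝ) 1, -pd1 v (-1) t) = 0)
    (he3 : (∫ s in Icc (-1 : ℝ) 1, pd2 v s 1) = 0)
    (he4 : (∫ s in Icc (-1 : ℝ) 1, -pd2 v s (-1)) = 0) :
    ∀ x y : ℝ, v x y = 0 := by
  obtain ⟨a₀, a₁, a₂, a₃, a₄, a₅, b₁, b₂, hv⟩ := hv
  obtain rfl : v = morleyPoly a₀ a₁ a₂ a₃ a₄ a₅ b₁ b₂ := funext₂ hv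
  obtain ⟨h₁₁, h₁₂, h₂₁, h₂₂⟩ := hvtx
  rw [integral_pd1_morleyPoly] at he1
  rw [integral_neg, integral_pd1_morleyPoly] at he2
  rw [integral_pd2_morleyPoly] at he3
  rw [integral_neg, integral_pd2_morleyPoly] at he4
  norm_num [morleyPoly] at h₁₁ h₁₂ h₂₁ h₂₂ he1 he2 he3 he4
  obtain ⟨rfl, rfl, rfl, rfl, rfl, rfl, rfl, rfl⟩ :
      a₀ = 0 ∧ a₁ = 0 ∧ a₂ = 0 ∧ a₃ = 0 ∧ a₄ = 0 ∧ a₅ = 0 ∧ b₁ = 0 ∧ b₂ = 0 := by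
    refine ⟨?_, ?_, ?_, ?_, ?_, ?_, ?_, ?_⟩ <;> linarith
  intro x y
  simp [morleyPoly]
end
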